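/- arXiv:1503.06591 — 6 statements merged into one kernel-verified Lean document; each statement's English description precedes it below -/
import Mathlib

section
/- Let p be a prime and k a nonnegative integer with base-p digits k_0,...,k_r (each between 0 and p-1). Then the central binomial coefficient C(2k, k) is divisible by p if and only if some digit k_i satisfies k_i > (p-1)/2. -/
/-!
By Lucas's theorem, `C(2k, k) ≡ C(2k % p, k % p) * C(2k / p, k / p) [MOD p]`. If the lowest
digit `r = k % p` satisfies `2r < p`, this is `C(2r, r) * C(2(k / p), k / p)` and `C(2r, r)` is
prime to `p`; otherwise `2k % p = 2r - p < r`, so the first factor vanishes. Induction on the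
digits of `k` finishes the proof.
-/

theorem Nat.Prime.not_dvd_choose_of_lt {p n k : ℕ} (hp : p.Prime) (hn : n < p) (hk : k ≤ n) :
    ¬p ∣ n.choose k := fun h =>
  hn.not_ge <| hp.dvd_factorial.mp <| h.trans ⟨_, by
    rw [← Nat.choose_mul_factorial_mul_factorial hk, mul_assoc]⟩

theorem Nat.Prime.dvd_centralBinom_iff {p : ℕ} (hp : p.Prime) (k : ℕ) :
    p ∣ k.centralBinom ↔ p ≤ 2 * (k % p) ∨ p ∣ (k / p).centralBinom := by
  have : Fact p.Prime := ⟨hp⟩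
  rw [Nat.centralBinom, Nat.centralBinom,
    (Choose.choose_modEq_choose_mod_mul_choose_div_nat (n := 2 * k) (k := k)).dvd_iff dvd_rfl]
  have hr : k % p < p := Nat.mod_lt _ hp.pos
  have hk : 2 * k = 2 * (k % p) + p * (2 * (k / p)) := by
    have := Nat.mod_add_div k p; linarith
  have hmod : 2 * k % p = 2 * (k % p) % p := by rw [hk, Nat.add_mul_mod_self_left]
  by_cases hcarry : p ≤ 2 * (k % p)
  · have hlow : 2 * k % p < k % p := by
      rw [hmod, Nat.mod_eq_sub_mod hcarry, Nat.mod_eq_of_lt (by omega)]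
      omega
    simp [hcarry, Nat.choose_eq_zero_of_lt hlow]
  · have hdiv : 2 * k / p = 2 * (k / p) := by
      rw [hk, Nat.add_mul_div_left _ _ hp.pos, Nat.div_eq_of_lt (by omega), zero_add]
    rw [hmod, Nat.mod_eq_of_lt (by omega), hdiv, hp.dvd_mul,
      or_iff_right (hp.not_dvd_choose_of_lt (by omega) (by omega)), or_iff_right hcarry]

/-- For a prime `p` and `k : ℕ`, `p` divides the central binomial coefficient
`C(2k, k)` iff some base-`p` digit of `k` exceeds `(p-1)/2`. -/
theorem central_binom_dvd_iff_digit_large (p : ℕ) (hp : p.Prime) (k : ℕ) :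
    p ∣ Nat.choose (2 * k) k ↔ ∃ d ∈ Nat.digits p k, (p - 1) / 2 < d := by
  rw [← Nat.centralBinom_eq_two_mul_choose]
  induction k using Nat.strong_induction_on with
  | _ k ih =>
    rcases k.eq_zero_or_pos with rfl | hk
    · simp [hp.ne_one]
    rw [hp.dvd_centralBinom_iff, ih _ (Nat.div_lt_self hk hp.one_lt),
      Nat.digits_def' hp.one_lt hk, List.exists_mem_cons_iff]
    exact or_congr_left (by have := hp.pos; omega)
end

section
/- Let p be a prime and k a nonnegative integer with base-p digits k_0,...,k_r. Then C(2k, k) ≡ ∏_{i=0}^r C(2k_i, k_i) (mod p). -/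
/-- For a prime `p` and `k : ℕ` with base-`p` digits `k_i`,
`C(2k,k) ≡ ∏_i C(2k_i, k_i) (mod p)`. -/
theorem central_binom_mod_p_eq_prod_digits (p : ℕ) (hp : p.Prime) (k : ℕ) :
    Nat.choose (2 * k) k ≡
      ((Nat.digits p k).map (fun d => Nat.choose (2 * d) d)).prod [MOD p] := by
  haveI := Fact.mk hp
  induction k using Nat.strong_induction_on with
  | _ k ih =>
    rcases Nat.eq_zero_or_pos k with rfl | hk
    · simpa using Nat.ModEq.refl 1
    rw [Nat.digits_def' hp.two_le hk, List.map_cons, List.prod_cons]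
    have hkp : k / p < k := Nat.div_lt_self hk hp.one_lt
    have hklt : k % p < p := Nat.mod_lt _ hp.pos
    have H := @Choose.choose_modEq_choose_mod_mul_choose_div_nat (2 * k) k p _
    have hsplit : 2 * k = 2 * (k % p) + 2 * (k / p) * p := by
      conv_lhs => rw [← Nat.mod_add_div k p]
      ring
    by_cases h : 2 * (k % p) < p
    · have h1 : 2 * k % p = 2 * (k % p) := by
        rw [hsplit, Nat.add_mul_mod_self_right, Nat.mod_eq_of_lt h]
      have h2 : 2 * k / p = 2 * (k / p) := by
        rw [hsplit, Nat.add_mul_div_right _ _ hp.pos, Nat.div_eq_of_lt h, zero_add]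
      rw [h1, h2] at H
      exact H.trans (Nat.ModEq.mul_left _ (ih _ hkp))
    · push_neg at h
      have h1 : 2 * k % p = 2 * (k % p) - p := by
        rw [hsplit, Nat.add_mul_mod_self_right, Nat.mod_eq_sub_mod h,
          Nat.mod_eq_of_lt (by omega)]
      have hz : Nat.choose (2 * k % p) (k % p) = 0 := by
        apply Nat.choose_eq_zero_of_lt
        omega
      have hL : Nat.choose (2 * k) k ≡ 0 [MOD p] := by
        simpa [hz] using H
      have hR : p ∣ Nat.choose (2 * (k % p)) (k % p) := by
        apply hp.dvd_choose hklt (by omega) (by omega)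
      refine hL.trans (Nat.modEq_zero_iff_dvd.mpr ?_).symm
      exact Dvd.dvd.mul_right hR _
end

section
/- Define a_n = Σ_{k=0}^n C(n,k)^2 · C(2k,k). For any prime p and any n with base-p digits n_0,...,n_r, one has a_n ≡ ∏_{i=0}^r a_{n_i} (mod p). -/
/-!
By Lucas' theorem, for digits `d, j < p` one has `C(d + p m, j + p i) ≡ C(d, j) C(m, i)`, and the
same factorisation holds for central binomial coefficients `C(2k, k)` (when `2j ≥ p` both sides
vanish mod `p`). Hence the summand `C(n, k)² C(2k, k)` factors over the last base-`p` digits of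
`n` and `k`; splitting `k = j + p i` turns the sum for `a (d + p m)` into the product
`a d * a m` mod `p`, and induction on the digits of `n` gives the theorem.
-/

open Finset

theorem sum_range_mul_eq_sum_sum {M : Type*} [AddCommMonoid M] (p m : ℕ) (f : ℕ → M) :
    ∑ k ∈ range (p * m), f k = ∑ i ∈ range m, ∑ j ∈ range p, f (j + p * i) := by
  induction m with
  | zero => simp
  | succ m ih => rw [Nat.mul_succ, sum_range_add, ih, sum_range_succ]; simp only [add_comm (p * m)]

theorem sum_range_add_mul_eq_mul {R : Type*} [CommSemiring R] {p : ℕ} (f : ℕ → ℕ → R)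
    (hf_zero : ∀ n k, n < k → f n k = 0)
    (hf_mul : ∀ d j m i, d < p → j < p → f (d + p * m) (j + p * i) = f d j * f m i)
    {d : ℕ} (hd : d < p) (m : ℕ) :
    ∑ k ∈ range (d + p * m + 1), f (d + p * m) k =
      (∑ j ∈ range (d + 1), f d j) * ∑ i ∈ range (m + 1), f m i := by
  have extend : ∀ n N, n < N → ∑ k ∈ range N, f n k = ∑ k ∈ range (n + 1), f n k :=
    fun n N h ↦ eventually_constant_sum (fun k hk ↦ hf_zero n k hk) h
  calc ∑ k ∈ range (d + p * m + 1), f (d + p * m) k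
      = ∑ k ∈ range (p * (m + 1)), f (d + p * m) k := (extend _ _ (by rw [mul_add]; omega)).symm
    _ = ∑ i ∈ range (m + 1), ∑ j ∈ range p, f d j * f m i := by
        rw [sum_range_mul_eq_sum_sum]
        refine sum_congr rfl fun i _ ↦ sum_congr rfl fun j hj ↦ hf_mul d j m i hd ?_
        exact mem_range.1 hj
    _ = (∑ j ∈ range p, f d j) * ∑ i ∈ range (m + 1), f m i := by rw [sum_mul_sum, sum_comm]
    _ = (∑ j ∈ range (d + 1), f d j) * ∑ i ∈ range (m + 1), f m i := by rw [extend d p hd]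

theorem Nat.eq_prod_map_digits {M : Type*} [CommMonoid M] {p : ℕ} (hp : 1 < p) {f : ℕ → M}
    (h_zero : f 0 = 1) (h_mul : ∀ d m, d < p → f (d + p * m) = f d * f m) (n : ℕ) :
    f n = ((Nat.digits p n).map f).prod := by
  induction n using Nat.strong_induction_on with
  | _ n ih =>
    rcases n.eq_zero_or_pos with rfl | hn
    · simp [h_zero]
    · rw [Nat.digits_def' hp hn, List.map_cons, List.prod_cons, ← ih _ (Nat.div_lt_self hn hp),
        ← h_mul _ _ (Nat.mod_lt n (by omega)), Nat.mod_add_div]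

section Lucas

variable {p : ℕ} [Fact p.Prime]

theorem natCast_choose_add_mul {d j : ℕ} (hd : d < p) (hj : j < p) (m i : ℕ) :
    ((d + p * m).choose (j + p * i) : ZMod p) = d.choose j * m.choose i := by
  have hp : 0 < p := (Fact.out : p.Prime).pos
  have lucas := (ZMod.natCast_eq_natCast_iff _ _ _).2
    (Choose.choose_modEq_choose_mod_mul_choose_div_nat (n := d + p * m) (k := j + p * i) (p := p))
  simpa [Nat.add_mul_mod_self_left, Nat.add_mul_div_left _ _ hp, Nat.mod_eq_of_lt, Nat.div_eq_of_lt,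
    hd, hj] using lucas

theorem natCast_centralBinom_add_mul {j : ℕ} (hj : j < p) (i : ℕ) :
    ((j + p * i).centralBinom : ZMod p) = j.centralBinom * i.centralBinom := by
  simp only [Nat.centralBinom_eq_two_mul_choose]
  rcases lt_or_ge (2 * j) p with h2j | h2j
  · rw [show 2 * (j + p * i) = 2 * j + p * (2 * i) by ring, natCast_choose_add_mul h2j hj]
  · -- the last digit of `2k` is `2j - p < j`, and `p ∣ C(2j, j)` because `j < p ≤ 2j`
    have hj_dvd : ((2 * j).choose j : ZMod p) = 0 := by
      rw [ZMod.natCast_eq_zero_iff]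
      exact (Fact.out : p.Prime).dvd_choose hj (by omega) h2j
    rw [show 2 * (j + p * i) = (2 * j - p) + p * (2 * i + 1) by
        have := show p * (2 * i + 1) = 2 * (p * i) + p by ring
        omega,
      natCast_choose_add_mul (by omega) hj, Nat.choose_eq_zero_of_lt (by omega), hj_dvd]
    simp

theorem sum_range_choose_sq_mul_centralBinom_add_mul {d : ℕ} (hd : d < p) (m : ℕ) :
    ∑ k ∈ range (d + p * m + 1), (((d + p * m).choose k : ZMod p)) ^ 2 * k.centralBinom =
      (∑ k ∈ range (d + 1), ((d.choose k : ZMod p)) ^ 2 * k.centralBinom) *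
        ∑ k ∈ range (m + 1), ((m.choose k : ZMod p)) ^ 2 * k.centralBinom := by
  refine sum_range_add_mul_eq_mul (fun n k ↦ ((n.choose k : ZMod p)) ^ 2 * k.centralBinom)
    (fun n k h ↦ by simp [Nat.choose_eq_zero_of_lt h]) (fun d j m i hd hj ↦ ?_) hd m
  simp only [natCast_choose_add_mul hd hj, natCast_centralBinom_add_mul hj]
  ring

end Lucas

/-- `a n = Σ_{k=0}^n C(n,k)² C(2k,k)` is multiplicative on base-`p` digits modulo `p`. -/
theorem a_seq_mod_p_eq_prod_digits (p : ℕ) (hp : p.Prime) (n : ℕ)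
    (a : ℕ → ℕ)
    (ha : ∀ m, a m = ∑ k ∈ Finset.range (m + 1),
      (Nat.choose m k) ^ 2 * Nat.choose (2 * k) k) :
    a n ≡ ((Nat.digits p n).map a).prod [MOD p] := by
  have := Fact.mk hp
  have ha_cast : ∀ m, (a m : ZMod p) =
      ∑ k ∈ range (m + 1), ((m.choose k : ZMod p)) ^ 2 * k.centralBinom := by
    simp [ha, Nat.centralBinom_eq_two_mul_choose]
  rw [← ZMod.natCast_eq_natCast_iff, Nat.cast_list_prod, List.map_map]
  refine Nat.eq_prod_map_digits (f := fun m ↦ (a m : ZMod p)) hp.one_lt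
    (by simp [ha_cast]) (fun d m hd ↦ ?_) n
  simp only [ha_cast]
  exact sum_range_choose_sq_mul_centralBinom_add_mul hd m
end

section
/- With a_n = Σ_{k=0}^n C(n,k)^2 C(2k,k), H(x) = Σ a_n x^n ∈ 𝔽_p[[x]] and H_p its truncation at degree p-1, one has H(x)^{1-p} = H_p(x) in 𝔽_p[[x]] (equivalently H(x) = H_p(x)·H(x)^p), for every prime p. -/
open PowerSeries Finset

/-- The coefficients `a n = Σ_{k=0}^n C(n,k)² C(2k,k)`. -/
def aSeq (n : ℕ) : ℕ :=
  ∑ k ∈ Finset.range (n + 1), (Nat.choose n k) ^ 2 * Nat.choose (2 * k) k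

/-- The generating series `H` reduced mod `p`. -/
noncomputable def Hmod (p : ℕ) : PowerSeries (ZMod p) :=
  PowerSeries.mk fun n => (aSeq n : ZMod p)

/-- The truncation `H_p(x) = Σ_{n=0}^{p-1} a_n x^n` mod `p`, as a power series. -/
noncomputable def HtruncSeries (p : ℕ) : PowerSeries (ZMod p) :=
  ∑ n ∈ Finset.range p, PowerSeries.C (R := ZMod p) (aSeq n : ZMod p) * PowerSeries.X ^ n

/-!
By Lucas's theorem for `C(n, k)` and for `C(2k, k)`, the summands of `a_{qp+r}` (with `r < p`)
factor over the base-`p` digits of `k`, so `a_{qp+r} ≡ a_q a_r (mod p)`. On generating series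
this reads `H(x) = H_p(x) H(x^p)`, and `H(x^p) = H(x)^p` in characteristic `p`.
-/

theorem Finset.sum_range_mul {M : Type*} [AddCommMonoid M] (f : ℕ → M) (p q : ℕ) :
    ∑ k ∈ range (q * p), f k = ∑ j ∈ range q, ∑ i ∈ range p, f (j * p + i) := by
  induction q with
  | zero => simp
  | succ q ih => rw [Nat.succ_mul, sum_range_add, ih, sum_range_succ]

def LucasProperty {R : Type*} [Mul R] (p : ℕ) (a : ℕ → R) : Prop :=
  ∀ q r, r < p → a (q * p + r) = a q * a r

theorem lucasProperty_sum_range_succ {R : Type*} [CommSemiring R] {p : ℕ} {t : ℕ → ℕ → R}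
    (ht : ∀ q r j i, r < p → i < p → t (q * p + r) (j * p + i) = t q j * t r i)
    (ht_zero : ∀ n k, n < k → t n k = 0) :
    LucasProperty p fun n ↦ ∑ k ∈ range (n + 1), t n k := by
  have extend {n m : ℕ} (h : n < m) : ∑ k ∈ range (n + 1), t n k = ∑ k ∈ range m, t n k :=
    sum_subset (range_subset_range.mpr h) fun k _ hk ↦ ht_zero n k (by simp at hk; omega)
  intro q r hr
  calc ∑ k ∈ range (q * p + r + 1), t (q * p + r) k
      = ∑ k ∈ range ((q + 1) * p), t (q * p + r) k := extend (by rw [Nat.succ_mul]; omega)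
    _ = ∑ j ∈ range (q + 1), ∑ i ∈ range p, t q j * t r i := by
      rw [sum_range_mul]
      exact sum_congr rfl fun j _ ↦ sum_congr rfl fun i hi ↦ ht q r j i hr (mem_range.mp hi)
    _ = (∑ j ∈ range (q + 1), t q j) * ∑ i ∈ range (r + 1), t r i := by
      rw [extend hr, sum_mul_sum]

namespace ZMod

variable {p : ℕ} [Fact p.Prime]

theorem choose_mul_add_mul_add {q r j i : ℕ} (hr : r < p) (hi : i < p) :
    ((q * p + r).choose (j * p + i) : ZMod p) = q.choose j * r.choose i := by
  have hp := (Fact.out : p.Prime).pos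
  have hdiv {a b : ℕ} (hb : b < p) : (a * p + b) / p = a := by
    rw [add_comm, Nat.add_mul_div_right _ _ hp, Nat.div_eq_of_lt hb, zero_add]
  rw [(ZMod.natCast_eq_natCast_iff _ _ _).mpr Choose.choose_modEq_choose_mod_mul_choose_div_nat,
    Nat.mul_add_mod_of_lt hr, Nat.mul_add_mod_of_lt hi, hdiv hr, hdiv hi, Nat.cast_mul, mul_comm]

theorem centralBinom_mul_add {j i : ℕ} (hi : i < p) :
    ((2 * (j * p + i)).choose (j * p + i) : ZMod p) = (2 * j).choose j * (2 * i).choose i := by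
  rcases lt_or_ge (2 * i) p with h | h
  · rw [show 2 * (j * p + i) = 2 * j * p + 2 * i by ring, choose_mul_add_mul_add h hi]
  · -- both sides vanish: the last digit `2 * i - p` of `2 * i` is smaller than `i`
    have hlt : 2 * i - p < i := by omega
    have hdigit : 2 * i - p < p := by omega
    have hlhs := choose_mul_add_mul_add (q := 2 * j + 1) (j := j) hdigit hi
    rw [show (2 * j + 1) * p + (2 * i - p) = 2 * (j * p + i) by zify [h]; ring] at hlhs
    have hrhs := choose_mul_add_mul_add (q := 1) (j := 0) hdigit hi
    rw [one_mul, zero_mul, zero_add, Nat.add_sub_cancel' h] at hrhs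
    simp [hlhs, hrhs, Nat.choose_eq_zero_of_lt hlt]

end ZMod

theorem lucasProperty_aSeq (p : ℕ) [Fact p.Prime] : LucasProperty p fun n ↦ (aSeq n : ZMod p) := by
  have hcast : (fun n ↦ (aSeq n : ZMod p)) =
      fun n ↦ ∑ k ∈ range (n + 1), (n.choose k : ZMod p) ^ 2 * (2 * k).choose k := by
    funext n
    push_cast [aSeq]
    rfl
  rw [hcast]
  refine lucasProperty_sum_range_succ (fun q r j i hr hi ↦ ?_) fun n k h ↦ ?_
  · rw [ZMod.choose_mul_add_mul_add hr hi, ZMod.centralBinom_mul_add hi]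
    ring
  · simp [Nat.choose_eq_zero_of_lt h]

theorem PowerSeries.mk_eq_sum_mul_expand {R : Type*} [CommRing R] {p : ℕ} (hp : p ≠ 0)
    {a : ℕ → R} (ha : LucasProperty p a) :
    mk a = (∑ r ∈ range p, C (a r) * X ^ r) * expand p hp (mk a) := by
  ext N
  have hcoeff (r : ℕ) : coeff N (C (a r) * X ^ r * expand p hp (mk a)) =
      if r ≤ N ∧ p ∣ N - r then a r * a ((N - r) / p) else 0 := by
    rw [mul_assoc, coeff_C_mul, coeff_X_pow_mul']
    split_ifs with h1 h2 h2 <;> simp_all [coeff_expand]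
  rw [sum_mul, map_sum, sum_eq_single_of_mem (N % p) (mem_range.mpr (Nat.mod_lt _ hp.bot_lt)),
    hcoeff, if_pos ⟨Nat.mod_le _ _, Nat.dvd_sub_mod N⟩]
  · rw [coeff_mk, ← Nat.div_eq_sub_mod_div, mul_comm, ← ha _ _ (Nat.mod_lt _ hp.bot_lt),
      Nat.div_add_mod']
  · intro r hr hne
    rw [hcoeff, if_neg]
    rintro ⟨hle, c, hc⟩
    exact hne (by rw [show N = r + p * c by omega, Nat.add_mul_mod_self_left,
      Nat.mod_eq_of_lt (mem_range.mp hr)])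

theorem PowerSeries.map_frobenius_expand {R : Type*} [CommRing R] (p : ℕ) (hp : p ≠ 0)
    [ExpChar R p] (f : R⟦X⟧) : (expand p hp f).map (frobenius R p) = f ^ p :=
  MvPowerSeries.map_frobenius_expand p hp

theorem ZMod.expand_card_powerSeries {p : ℕ} [Fact p.Prime] (f : (ZMod p)⟦X⟧) :
    expand p (Fact.out : p.Prime).ne_zero f = f ^ p := by
  rw [← map_frobenius_expand, ZMod.frobenius_zmod, map_id, id]

/-- In `𝔽_p⟦x⟧` one has `H(x)^{1-p} = H_p(x)`, i.e. `H · (H⁻¹)^p = H_p`,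
equivalently `H = H_p · H^p`. -/
theorem H_pow_one_sub_p_eq_Htrunc (p : ℕ) [Fact p.Prime] :
    Hmod p * ((Hmod p)⁻¹) ^ p = HtruncSeries p ∧
      Hmod p = HtruncSeries p * (Hmod p) ^ p := by
  have hfactor : Hmod p = HtruncSeries p * Hmod p ^ p := by
    rw [← ZMod.expand_card_powerSeries]
    exact mk_eq_sum_mul_expand _ (lucasProperty_aSeq p)
  have hinv : Hmod p * (Hmod p)⁻¹ = 1 := PowerSeries.mul_inv_cancel _ (by simp [Hmod, aSeq])
  refine ⟨?_, hfactor⟩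
  nth_rewrite 1 [hfactor]
  rw [mul_assoc, ← mul_pow, hinv, one_pow, mul_one]
end

section
/- Define H(x) = Σ_{n≥0} a_n x^n ∈ ℚ[[x]] with a_n = Σ_{k=0}^n C(n,k)^2 C(2k,k). Then (1/(1-3x)) · H((x^2+x)/(3x-1)) = H(x^2) as an identity of formal power series (i.e., after expanding the composition, noting (x^2+x)/(3x-1) = -x·(1+x)·(1-3x)^{-1} has zero constant term). -/
open PowerSeries Finset

/-- The generating series `H = Σ a_n x^n ∈ ℚ⟦x⟧`. -/
noncomputable def Hq : PowerSeries ℚ := PowerSeries.mk fun n => (aSeq n : ℚ)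

/-- Composition `Σ_n c_n u^n` of a coefficient sequence `c` with a power series `u`
having zero constant term: the `n`-th coefficient only involves `u^k` for `k ≤ n`. -/
noncomputable def seriesComp (c : ℕ → ℚ) (u : PowerSeries ℚ) : PowerSeries ℚ :=
  PowerSeries.mk fun n =>
    PowerSeries.coeff (R := ℚ) n (∑ k ∈ Finset.range (n + 1), PowerSeries.C (R := ℚ) (c k) * u ^ k)

/-- The power series `(x²+x)/(3x-1)`, expanded in `ℚ⟦x⟧`; it has zero constant term. -/
noncomputable def uSeries : PowerSeries ℚ :=
  (PowerSeries.X ^ 2 + PowerSeries.X) * (3 * PowerSeries.X - 1)⁻¹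

/-!
`H` is annihilated by the second-order operator `opH` (an Apéry-like equation, equivalent to the
three-term recurrence of `aSeq`, which is proved by creative telescoping). A chain-rule computation
shows that both `(1 - 3x)⁻¹ H(u)` and `H(x²)` are then annihilated by one operator `opHsq`, whose
indicial equation at `0` is `n² = 0`; so a solution is determined by its constant term, and both
sides have constant term `aSeq 0`.
-/

namespace PowerSeries

variable {R : Type*}

@[simp]
lemma coeff_ofNat_mul [CommSemiring R] (m : ℕ) [m.AtLeastTwo] (f : R⟦X⟧) (n : ℕ) :
    coeff n (ofNat(m) * f) = ofNat(m) * coeff n f := by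
  rw [← map_ofNat C m, coeff_C_mul]

@[simp]
lemma derivative_ofNat [CommSemiring R] (n : ℕ) [n.AtLeastTwo] : d⁄dX R (ofNat(n) : R⟦X⟧) = 0 :=
  Derivation.map_natCast _ n

noncomputable def euler [CommSemiring R] (f : R⟦X⟧) : R⟦X⟧ := X * d⁄dX R f

@[simp]
lemma coeff_euler [CommSemiring R] (f : R⟦X⟧) (n : ℕ) : coeff n (euler f) = n * coeff n f := by
  cases n with
  | zero => simp [euler]
  | succ n => rw [euler, coeff_succ_X_mul, coeff_derivative, mul_comm]; push_cast; rfl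

lemma coeff_mul_of_forall_lt [CommSemiring R] {g : R⟦X⟧} {n : ℕ} (hg : ∀ j < n, coeff j g = 0)
    (f : R⟦X⟧) : coeff n (f * g) = constantCoeff f * coeff n g := by
  obtain ⟨h, rfl⟩ := X_pow_dvd_iff.mpr hg
  rw [mul_left_comm, coeff_X_pow_mul', coeff_X_pow_mul', if_pos le_rfl, if_pos le_rfl, Nat.sub_self,
    coeff_zero_eq_constantCoeff, map_mul]

/-- The indicial polynomial at `0` is `n²`: the coefficient of `X ^ m` in the equation is
`(m + 1)² * coeff (m + 1) y` plus terms involving only lower coefficients of `y`. -/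
theorem eq_zero_of_X_mul_derivative_derivative {K : Type*} [Field K] [CharZero K]
    {A B C y : K⟦X⟧} (hA : constantCoeff A = 1) (hB : constantCoeff B = 1)
    (hy : constantCoeff y = 0) (h : X * A * d⁄dX K (d⁄dX K y) + B * d⁄dX K y + C * y = 0) :
    y = 0 := by
  ext n
  induction n using Nat.strong_induction_on with
  | _ n ih =>
    rcases n with _ | m
    · simpa using hy
    have hy' : ∀ j < m + 1, coeff j y = 0 := ih
    have hdy : ∀ j < m, coeff j (d⁄dX K y) = 0 := fun j hj ↦ by
      rw [coeff_derivative, hy' (j + 1) (by omega), zero_mul]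
    have hX : coeff m (X * A * d⁄dX K (d⁄dX K y)) = m * (m + 1) * coeff (m + 1) y := by
      rcases m with _ | k
      · simp
      rw [mul_assoc, coeff_succ_X_mul, coeff_mul_of_forall_lt, hA, coeff_derivative,
        coeff_derivative]
      · push_cast; ring
      · intro j hj
        rw [coeff_derivative, hdy (j + 1) (by omega), zero_mul]
    have key := congrArg (coeff m) h
    rw [map_add, map_add, hX, coeff_mul_of_forall_lt (fun j hj ↦ hy' j (by omega)),
      coeff_mul_of_forall_lt hdy, hy' m (by omega), hB, coeff_derivative, map_zero] at key
    have hm : ((m : K) + 1) ^ 2 ≠ 0 := pow_ne_zero 2 (Nat.cast_add_one_ne_zero m)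
    exact (mul_eq_zero.mp (by linear_combination key : ((m : K) + 1) ^ 2 * coeff (m + 1) y = 0))
      |>.resolve_left hm

lemma coeff_subst_eq_sum_range [CommRing R] {u : R⟦X⟧} (hu : constantCoeff u = 0) (f : R⟦X⟧)
    (n : ℕ) : coeff n (f.subst u) = ∑ k ∈ range (n + 1), coeff k f * coeff n (u ^ k) := by
  rw [coeff_subst' (.of_constantCoeff_zero' hu), finsum_eq_sum_of_support_subset]
  · rfl
  intro k hk
  by_contra hkn
  apply hk
  have : X ^ k ∣ u ^ k := pow_dvd_pow_of_dvd (X_dvd_iff.mpr hu) k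
  simp only [X_pow_dvd_iff.mp this n (by simpa using hkn), smul_zero]

lemma zero_subst [CommRing R] {a : R⟦X⟧} (ha : HasSubst a) : (0 : R⟦X⟧).subst a = 0 := by
  rw [← coe_substAlgHom ha, map_zero]

lemma derivative_derivative_subst [CommRing R] {f g : R⟦X⟧} (hg : HasSubst g) :
    d⁄dX R (d⁄dX R (f.subst g))
      = (d⁄dX R (d⁄dX R f)).subst g * d⁄dX R g ^ 2 + (d⁄dX R f).subst g * d⁄dX R (d⁄dX R g) := by
  rw [derivative_subst hg, Derivation.leibniz, derivative_subst hg, smul_eq_mul, smul_eq_mul]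
  ring

lemma map_inv_of_constantCoeff_ne_zero {k K : Type*} [Field k] [DivisionRing K] (φ : k⟦X⟧ →+* K)
    {g : k⟦X⟧} (hg : constantCoeff g ≠ 0) : φ g⁻¹ = (φ g)⁻¹ :=
  (inv_eq_of_mul_eq_one_right (by rw [← map_mul, PowerSeries.mul_inv_cancel g hg, map_one])).symm

end PowerSeries

lemma Derivation.map_map_mul {R A : Type*} [CommRing R] [CommRing A] [Algebra R A]
    (D : Derivation R A A) (a b : A) :
    D (D (a * b)) = D (D a) * b + 2 * D a * D b + a * D (D b) := by
  simp only [Derivation.leibniz, map_add, smul_eq_mul]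
  ring

lemma Nat.cast_choose_mul_succ_eq {R : Type*} [CommRing R] (n k : ℕ) :
    (n.choose k : R) * (n + 1) = ((n + 1).choose k : R) * (n + 1 - k) := by
  rcases le_or_gt k (n + 1) with hk | hk
  · have := congrArg (Nat.cast (R := R)) (Nat.choose_mul_succ_eq n k)
    push_cast [Nat.cast_sub hk] at this
    exact this
  · simp [Nat.choose_eq_zero_of_lt hk, Nat.choose_eq_zero_of_lt (Nat.lt_of_succ_lt hk)]

lemma Nat.cast_choose_succ_right_eq {R : Type*} [CommRing R] (n k : ℕ) :
    (n.choose (k + 1) : R) * (k + 1) = (n.choose k : R) * (n - k) := by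
  rcases le_or_gt k n with hk | hk
  · have := congrArg (Nat.cast (R := R)) (Nat.choose_succ_right_eq n k)
    push_cast [Nat.cast_sub hk] at this
    exact this
  · simp [Nat.choose_eq_zero_of_lt hk, Nat.choose_eq_zero_of_lt (Nat.lt_succ_of_lt hk)]

def aTerm (n k : ℕ) : ℚ := n.choose k ^ 2 * k.centralBinom

/-- Zeilberger's certificate for the recurrence of `aSeq`. -/
def wzCert (n k : ℕ) : ℚ :=
  k ^ 3 * k.centralBinom * (n + 2).choose k ^ 2 * (3 * k - 4 * n - 8)

lemma aTerm_telescope (n k : ℕ) :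
    ((n : ℚ) + 2) ^ 2 * (((n : ℚ) + 2) ^ 2 * aTerm (n + 2) k
      - (10 * ((n : ℚ) + 1) ^ 2 + 10 * ((n : ℚ) + 1) + 3) * aTerm (n + 1) k
      + 9 * ((n : ℚ) + 1) ^ 2 * aTerm n k)
    = wzCert n (k + 1) - wzCert n k := by
  have e₀ : (n.choose k : ℚ) = (n + 1).choose k * (n + 1 - k) / (n + 1) := by
    rw [eq_div_iff (by positivity), Nat.cast_choose_mul_succ_eq]
  have e₁ : ((n + 1).choose k : ℚ) = (n + 2).choose k * (n + 2 - k) / (n + 2) := by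
    have := Nat.cast_choose_mul_succ_eq (R := ℚ) (n + 1) k
    push_cast at this
    rw [eq_div_iff (by positivity)]
    linear_combination this
  have e₂ : ((n + 2).choose (k + 1) : ℚ) = (n + 2).choose k * (n + 2 - k) / (k + 1) := by
    have := Nat.cast_choose_succ_right_eq (R := ℚ) (n + 2) k
    push_cast at this
    rw [eq_div_iff (by positivity)]
    linear_combination this
  have e₃ : ((k + 1).centralBinom : ℚ) = 2 * (2 * k + 1) * k.centralBinom / (k + 1) := by
    rw [eq_div_iff (by positivity)]
    exact_mod_cast (mul_comm _ _).trans (Nat.succ_mul_centralBinom_succ k)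
  simp only [aTerm, wzCert, e₀, e₁, e₂, e₃]
  push_cast
  field_simp
  ring

lemma aSeq_eq_sum_aTerm {m N : ℕ} (h : m < N) : (aSeq m : ℚ) = ∑ k ∈ range N, aTerm m k := by
  rw [aSeq, ← sum_subset (range_subset_range.2 h) fun k _ hk ↦ ?_]
  · simp [aTerm, Nat.centralBinom_eq_two_mul_choose]
  · simp [aTerm, Nat.choose_eq_zero_of_lt (by simpa using hk : m < k)]

theorem aSeq_recurrence (n : ℕ) :
    ((n : ℚ) + 2) ^ 2 * aSeq (n + 2)
      = (10 * ((n : ℚ) + 1) ^ 2 + 10 * ((n : ℚ) + 1) + 3) * aSeq (n + 1)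
        - 9 * ((n : ℚ) + 1) ^ 2 * aSeq n := by
  have key : ((n : ℚ) + 2) ^ 2 * (((n : ℚ) + 2) ^ 2 * aSeq (n + 2)
      - (10 * ((n : ℚ) + 1) ^ 2 + 10 * ((n : ℚ) + 1) + 3) * aSeq (n + 1)
      + 9 * ((n : ℚ) + 1) ^ 2 * aSeq n) = 0 := calc
    _ = ∑ k ∈ range (n + 3), (wzCert n (k + 1) - wzCert n k) := by
      rw [aSeq_eq_sum_aTerm (N := n + 3) (by omega), aSeq_eq_sum_aTerm (N := n + 3) (by omega),
        aSeq_eq_sum_aTerm (N := n + 3) (by omega)]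
      simp only [mul_sum, ← sum_sub_distrib, ← sum_add_distrib]
      exact sum_congr rfl fun k _ ↦ aTerm_telescope n k
    _ = 0 := by
      rw [sum_range_sub]
      simp [wzCert]
  linear_combination (mul_eq_zero.mp key).resolve_left (by positivity)

noncomputable def opH (f : ℚ⟦X⟧) : ℚ⟦X⟧ :=
  (X - 10 * X ^ 2 + 9 * X ^ 3) * d⁄dX ℚ (d⁄dX ℚ f) + (1 - 20 * X + 27 * X ^ 2) * d⁄dX ℚ f
    + (9 * X - 3) * f

lemma X_mul_opH (f : ℚ⟦X⟧) :
    X * opH f = euler (euler f) - X * (10 * euler (euler f) + 10 * euler f + 3 * f)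
      + X * (X * (9 * euler (euler f) + 18 * euler f + 9 * f)) := by
  simp only [opH, euler, Derivation.leibniz, derivative_X, smul_eq_mul]
  ring

theorem opH_Hq : opH Hq = 0 := by
  suffices X * opH Hq = 0 from (mul_eq_zero.mp this).resolve_left X_ne_zero
  ext n
  rw [X_mul_opH]
  simp only [map_add, map_sub, coeff_euler, Hq, coeff_mk, map_zero]
  rcases n with _ | _ | n
  · simp
  · simp only [coeff_succ_X_mul, coeff_zero_X_mul, map_add, coeff_euler, coeff_ofNat_mul, coeff_mk]
    norm_num [aSeq, sum_range_succ]
  · simp only [coeff_succ_X_mul, map_add, coeff_euler, coeff_ofNat_mul, coeff_mk]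
    push_cast
    linear_combination aSeq_recurrence n

lemma subst_opH {u : ℚ⟦X⟧} (hu : HasSubst u) (f : ℚ⟦X⟧) :
    (opH f).subst u = (u - 10 * u ^ 2 + 9 * u ^ 3) * (d⁄dX ℚ (d⁄dX ℚ f)).subst u
      + (1 - 20 * u + 27 * u ^ 2) * (d⁄dX ℚ f).subst u + (9 * u - 3) * f.subst u := by
  rw [← coe_substAlgHom hu]
  simp [opH, map_ofNat, substAlgHom_X]

noncomputable def opHsq (y : ℚ⟦X⟧) : ℚ⟦X⟧ :=
  X * ((1 - X ^ 2) * (1 - 9 * X ^ 2)) * d⁄dX ℚ (d⁄dX ℚ y) + (1 - 30 * X ^ 2 + 45 * X ^ 4) * d⁄dX ℚ y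
    + (36 * X ^ 3 - 12 * X) * y

lemma opHsq_sub (y z : ℚ⟦X⟧) : opHsq (y - z) = opHsq y - opHsq z := by
  simp only [opHsq, map_sub]
  ring

lemma opHsq_subst_X_sq (f : ℚ⟦X⟧) :
    opHsq (f.subst (X ^ 2)) = 4 * X * (opH f).subst (X ^ 2 : ℚ⟦X⟧) := by
  have hX2 : HasSubst (X ^ 2 : ℚ⟦X⟧) := .X_pow two_ne_zero
  rw [subst_opH hX2, opHsq, derivative_subst hX2, Derivation.leibniz, derivative_subst hX2]
  simp
  ring

lemma derivative_inv_one_sub_three_mul_X :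
    d⁄dX ℚ (1 - 3 * X : ℚ⟦X⟧)⁻¹ = 3 * (1 - 3 * X)⁻¹ ^ 2 := by
  simp
  ring

lemma derivative_derivative_inv_one_sub_three_mul_X :
    d⁄dX ℚ (d⁄dX ℚ (1 - 3 * X : ℚ⟦X⟧)⁻¹) = 18 * (1 - 3 * X)⁻¹ ^ 3 := by
  rw [derivative_inv_one_sub_three_mul_X]
  simp
  ring

lemma derivative_uSeries : d⁄dX ℚ uSeries
    = (2 * X + 1) * (3 * X - 1)⁻¹ - 3 * (X ^ 2 + X) * (3 * X - 1)⁻¹ ^ 2 := by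
  simp [uSeries]
  ring

lemma derivative_derivative_uSeries : d⁄dX ℚ (d⁄dX ℚ uSeries) = 2 * (3 * X - 1)⁻¹
    - 6 * (2 * X + 1) * (3 * X - 1)⁻¹ ^ 2 + 18 * (X ^ 2 + X) * (3 * X - 1)⁻¹ ^ 3 := by
  rw [derivative_uSeries]
  simp
  ring

lemma opHsq_mul_subst_uSeries (f : ℚ⟦X⟧) :
    opHsq ((1 - 3 * X)⁻¹ * f.subst uSeries)
      = (1 - 3 * X) * d⁄dX ℚ uSeries * (opH f).subst uSeries := by
  have hu : HasSubst uSeries := HasSubst.of_constantCoeff_zero' (by simp [uSeries])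
  rw [subst_opH hu, opHsq, Derivation.map_map_mul, Derivation.leibniz,
    derivative_derivative_subst hu, derivative_subst hu,
    derivative_derivative_inv_one_sub_three_mul_X, derivative_inv_one_sub_three_mul_X,
    derivative_derivative_uSeries, derivative_uSeries]
  generalize f.subst uSeries = F, (d⁄dX ℚ f).subst uSeries = F₁,
    (d⁄dX ℚ (d⁄dX ℚ f)).subst uSeries = F₂
  rw [uSeries]
  -- What is left is an identity of rational functions in `X`; check it in the fraction field.
  apply IsFractionRing.injective ℚ⟦X⟧ (FractionRing ℚ⟦X⟧)
  have h₁ := map_inv_of_constantCoeff_ne_zero (algebraMap ℚ⟦X⟧ (FractionRing ℚ⟦X⟧))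
    (g := 1 - 3 * X) (by simp)
  have h₂ := map_inv_of_constantCoeff_ne_zero (algebraMap ℚ⟦X⟧ (FractionRing ℚ⟦X⟧))
    (g := 3 * X - 1) (by simp)
  have hne : algebraMap ℚ⟦X⟧ (FractionRing ℚ⟦X⟧) (1 - 3 * X) ≠ 0 :=
    (map_ne_zero_iff _ (IsFractionRing.injective _ _)).mpr fun h ↦ by
      simpa using congrArg constantCoeff h
  simp only [map_add, map_sub, map_mul, map_pow, map_ofNat, map_one, smul_eq_mul] at h₁ h₂ hne ⊢
  rw [h₁, h₂]
  generalize algebraMap ℚ⟦X⟧ (FractionRing ℚ⟦X⟧) X = x at hne ⊢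
  have hne₁ : 1 - x * 3 ≠ 0 := by rwa [mul_comm]
  have hne₂ : -1 + x * 3 ≠ 0 := fun h ↦ hne (by linear_combination -h)
  ring_nf
  field_simp
  ring

lemma seriesComp_eq_subst (c : ℕ → ℚ) {u : ℚ⟦X⟧} (hu : constantCoeff u = 0) :
    seriesComp c u = (mk c).subst u := by
  ext n
  simp [seriesComp, coeff_subst_eq_sum_range hu, coeff_C_mul]

/-- The functional equation `(1/(1-3x)) · H((x²+x)/(3x-1)) = H(x²)` in `ℚ⟦x⟧`. -/
theorem H_functional_equation :
    (1 - 3 * PowerSeries.X : PowerSeries ℚ)⁻¹ *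
        seriesComp (fun n => (aSeq n : ℚ)) uSeries
      = PowerSeries.mk (fun m => if 2 ∣ m then (aSeq (m / 2) : ℚ) else 0) := by
  have hu : constantCoeff uSeries = 0 := by simp [uSeries]
  have hLHS : seriesComp (fun n => (aSeq n : ℚ)) uSeries = Hq.subst uSeries :=
    seriesComp_eq_subst _ hu
  have hRHS : mk (fun m => if 2 ∣ m then (aSeq (m / 2) : ℚ) else 0) = Hq.subst (X ^ 2 : ℚ⟦X⟧) := by
    ext m
    simp [Hq]
  have hode : opHsq ((1 - 3 * X)⁻¹ * Hq.subst uSeries - Hq.subst (X ^ 2 : ℚ⟦X⟧)) = 0 := by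
    rw [opHsq_sub, opHsq_mul_subst_uSeries, opHsq_subst_X_sq, opH_Hq,
      zero_subst (.of_constantCoeff_zero' hu), zero_subst (.X_pow two_ne_zero)]
    ring
  rw [hLHS, hRHS, ← sub_eq_zero]
  refine eq_zero_of_X_mul_derivative_derivative (by simp) (by simp) ?_ hode
  rw [map_sub, map_mul, ← coeff_zero_eq_constantCoeff_apply (Hq.subst uSeries),
    coeff_subst_eq_sum_range hu]
  simp
end

section
/- Over any field K of characteristic not 2 or 3, the pair of rational maps (f,g) = ((x²+x)/(3x-1), y²) is conjugate to Elkies' pair (f_E, g_E) = (x², (y²+3y)/(y-1)): explicitly, with τ(x) = (3x+1)/(x-1) and σ(x) = (x-1)/(x-9), one has f = σ∘f_E∘τ and g = σ∘g_E∘τ as rational functions. -/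
open RatFunc

/-- Over any field `K` of characteristic not `2` or `3`, the pair
`(f,g) = ((x²+x)/(3x-1), y²)` is conjugate to Elkies' pair
`(f_E, g_E) = (x², (y²+3y)/(y-1))` via `τ(x) = (3x+1)/(x-1)` and
`σ(x) = (x-1)/(x-9)`: one has `f = σ∘f_E∘τ` and `g = σ∘g_E∘τ` in `K(x)`. -/
theorem conjugate_to_Elkies (K : Type*) [Field K]
    (h2 : ringChar K ≠ 2) (h3 : ringChar K ≠ 3) :
    ∀ τ : RatFunc K, τ = (3 * RatFunc.X + 1) / (RatFunc.X - 1) →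
      ((RatFunc.X ^ 2 + RatFunc.X) / (3 * RatFunc.X - 1) : RatFunc K)
          = (τ ^ 2 - 1) / (τ ^ 2 - 9) ∧
        (RatFunc.X ^ 2 : RatFunc K)
          = ((τ ^ 2 + 3 * τ) / (τ - 1) - 1) / ((τ ^ 2 + 3 * τ) / (τ - 1) - 9) := by
  intro τ hτ
  -- characteristic facts
  have h2K : (2 : K) ≠ 0 := fun h => h2 (CharP.ringChar_of_prime_eq_zero Nat.prime_two h)
  have h3K : (3 : K) ≠ 0 := fun h => h3 (CharP.ringChar_of_prime_eq_zero Nat.prime_three h)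
  have i2 : (2 : RatFunc K) ≠ 0 := by
    intro h
    apply h2K
    apply (algebraMap K (RatFunc K)).injective
    rw [map_ofNat, map_zero]; exact h
  have i3 : (3 : RatFunc K) ≠ 0 := by
    intro h
    apply h3K
    apply (algebraMap K (RatFunc K)).injective
    rw [map_ofNat, map_zero]; exact h
  have i4 : (4 : RatFunc K) ≠ 0 := by
    have : (4 : RatFunc K) = 2 ^ 2 := by norm_num
    rw [this]; exact pow_ne_zero _ i2
  have i8 : (8 : RatFunc K) ≠ 0 := by
    have : (8 : RatFunc K) = 2 ^ 3 := by norm_num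
    rw [this]; exact pow_ne_zero _ i2
  -- polynomial nonvanishing facts
  have key : ∀ p : Polynomial K, p ≠ 0 → algebraMap (Polynomial K) (RatFunc K) p ≠ 0 :=
    fun p hp => RatFunc.algebraMap_ne_zero hp
  have hX1 : (RatFunc.X - 1 : RatFunc K) ≠ 0 := by
    have h : (RatFunc.X - 1 : RatFunc K)
        = algebraMap (Polynomial K) (RatFunc K) (Polynomial.X - Polynomial.C 1) := by
      simp [map_sub, RatFunc.algebraMap_X]
    rw [h]; exact key _ (Polynomial.X_sub_C_ne_zero 1)
  have hXp1 : (RatFunc.X + 1 : RatFunc K) ≠ 0 := by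
    have h : (RatFunc.X + 1 : RatFunc K)
        = algebraMap (Polynomial K) (RatFunc K) (Polynomial.X - Polynomial.C (-1)) := by
      simp [map_sub, RatFunc.algebraMap_X]
    rw [h]; exact key _ (Polynomial.X_sub_C_ne_zero (-1))
  have h3X : (3 * RatFunc.X - 1 : RatFunc K) ≠ 0 := by
    have h : (3 * RatFunc.X - 1 : RatFunc K)
        = algebraMap (Polynomial K) (RatFunc K)
            (3 * Polynomial.X - 1 : Polynomial K) := by
      simp [map_sub, map_mul, map_ofNat, RatFunc.algebraMap_X]
    rw [h]
    apply key
    intro hp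
    have := congrArg (Polynomial.eval 0) hp
    simp at this
  -- key computations
  have hA : τ ^ 2 - 9 = 8 * (3 * RatFunc.X - 1) / (RatFunc.X - 1) ^ 2 := by
    rw [hτ]; field_simp; ring
  have hA0 : τ ^ 2 - 9 ≠ 0 := by
    rw [hA]; exact div_ne_zero (mul_ne_zero i8 h3X) (pow_ne_zero _ hX1)
  have hτm1 : τ - 1 = 2 * (RatFunc.X + 1) / (RatFunc.X - 1) := by
    rw [hτ]; field_simp; ring
  have hτm1_0 : τ - 1 ≠ 0 := by
    rw [hτm1]; exact div_ne_zero (mul_ne_zero i2 hXp1) hX1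
  have hτm3 : τ - 3 = 4 / (RatFunc.X - 1) := by
    rw [hτ]; field_simp; ring
  have hg9 : (τ ^ 2 + 3 * τ) / (τ - 1) - 9 = (τ - 3) ^ 2 / (τ - 1) := by
    field_simp
    ring
  have hg9_0 : (τ ^ 2 + 3 * τ) / (τ - 1) - 9 ≠ 0 := by
    rw [hg9]
    exact div_ne_zero (pow_ne_zero _ (by rw [hτm3]; exact div_ne_zero i4 hX1)) hτm1_0
  constructor
  · rw [div_eq_div_iff h3X hA0, hτ]
    field_simp
    ring
  · rw [eq_div_iff hg9_0]
    field_simp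
    rw [hτ]
    field_simp
    ring
end
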